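/- In the twisted group algebra on (ℤ/2)³ with product e_a • e_b = F(a,b)e_{a+b}, the general quasi-associativity law holds: (e_a • e_b) • e_c = (-1)^{a·(b×c)} e_a • (e_b • e_c) for all a,b,c ∈ (ℤ/2)³. -/

import Mathlib

/-- The exponent (in `ℤ/2`) of the octonion cochain on `(ℤ/2)³`. -/
def octExpo (a b : Fin 3 → ZMod 2) : ZMod 2 :=
  a 0 * b 0 + a 0 * b 1 + a 0 * b 2 + a 1 * b 1 + a 1 * b 2 + a 2 * b 2 +
    a 0 * b 1 * b 2 + b 0 * a 1 * b 2 + b 0 * b 1 * a 2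

/-- The octonion cochain with values in `ℂ`. -/
def octF (a b : Fin 3 → ZMod 2) : ℂ := (-1 : ℂ) ^ (octExpo a b).val

/-- The twisted group algebra product on `ℂ[(ℤ/2)³]` (elements as functions
`(ℤ/2)³ → ℂ`): `e_a • e_b = F(a,b) e_{a+b}`. -/
noncomputable def bul (f g : (Fin 3 → ZMod 2) → ℂ) : (Fin 3 → ZMod 2) → ℂ :=
  fun x => ∑ p : (Fin 3 → ZMod 2) × (Fin 3 → ZMod 2),
    if p.1 + p.2 = x then octF p.1 p.2 * f p.1 * g p.2 else 0

/-- Basis element `e_a` of the twisted group algebra. -/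
def ee (a : Fin 3 → ZMod 2) : (Fin 3 → ZMod 2) → ℂ :=
  fun x => if x = a then 1 else 0


/-- `a·(b×c)` mod 2: the determinant of the matrix with rows `a, b, c` over `ℤ/2`. -/
def tripleProd (a b c : Fin 3 → ZMod 2) : ZMod 2 :=
  a 0 * (b 1 * c 2 + b 2 * c 1) + a 1 * (b 2 * c 0 + b 0 * c 2) +
    a 2 * (b 0 * c 1 + b 1 * c 0)

lemma m1pow_add (x y : ZMod 2) :
    ((-1 : ℂ)) ^ (x + y).val = (-1 : ℂ) ^ x.val * (-1 : ℂ) ^ y.val := by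
  rw [ZMod.val_add, ← pow_add, neg_one_pow_eq_pow_mod_two (R := ℂ) (x.val + y.val)]

lemma expo_key (a b c : Fin 3 → ZMod 2) :
    octExpo a b + octExpo (a + b) c =
      tripleProd a b c + octExpo b c + octExpo a (b + c) := by
  have h : ∀ x0 x1 x2 y0 y1 y2 z0 z1 z2 : ZMod 2,
      (x0 * y0 + x0 * y1 + x0 * y2 + x1 * y1 + x1 * y2 + x2 * y2 +
        x0 * y1 * y2 + y0 * x1 * y2 + y0 * y1 * x2) +
      ((x0 + y0) * z0 + (x0 + y0) * z1 + (x0 + y0) * z2 + (x1 + y1) * z1 +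
        (x1 + y1) * z2 + (x2 + y2) * z2 +
        (x0 + y0) * z1 * z2 + z0 * (x1 + y1) * z2 + z0 * z1 * (x2 + y2)) =
      (x0 * (y1 * z2 + y2 * z1) + x1 * (y2 * z0 + y0 * z2) +
        x2 * (y0 * z1 + y1 * z0)) +
      (y0 * z0 + y0 * z1 + y0 * z2 + y1 * z1 + y1 * z2 + y2 * z2 +
        y0 * z1 * z2 + z0 * y1 * z2 + z0 * z1 * y2) +
      (x0 * (y0 + z0) + x0 * (y1 + z1) + x0 * (y2 + z2) + x1 * (y1 + z1) +
        x1 * (y2 + z2) + x2 * (y2 + z2) +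
        x0 * (y1 + z1) * (y2 + z2) + (y0 + z0) * x1 * (y2 + z2) +
        (y0 + z0) * (y1 + z1) * x2) := by decide
  simpa [octExpo, tripleProd, Pi.add_apply] using
    h (a 0) (a 1) (a 2) (b 0) (b 1) (b 2) (c 0) (c 1) (c 2)

lemma bul_ee (a b : Fin 3 → ZMod 2) :
    bul (ee a) (ee b) = octF a b • ee (a + b) := by
  funext x
  simp only [bul, ee, Pi.smul_apply, smul_eq_mul]
  rw [Finset.sum_eq_single (a, b)]
  · by_cases h : x = a + b <;> simp [h, eq_comm]
  · rintro ⟨p, q⟩ - hpq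
    by_cases hp : p = a <;> by_cases hq : q = b <;>
      simp_all
  · simp

lemma bul_smul_left (s : ℂ) (f g : (Fin 3 → ZMod 2) → ℂ) :
    bul (s • f) g = s • bul f g := by
  funext x
  simp [bul, Finset.mul_sum, mul_ite, mul_assoc, mul_left_comm]

lemma bul_smul_right (s : ℂ) (f g : (Fin 3 → ZMod 2) → ℂ) :
    bul f (s • g) = s • bul f g := by
  funext x
  simp [bul, Finset.mul_sum, mul_ite, mul_assoc, mul_left_comm]

/-- quasi-associativity of the octonion twisted group algebra:
`(e_a • e_b) • e_c = (-1)^{a·(b×c)} e_a • (e_b • e_c)`. -/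
theorem octonion_quasi_associativity (a b c : Fin 3 → ZMod 2) :
    bul (bul (ee a) (ee b)) (ee c) =
      ((-1 : ℂ) ^ (tripleProd a b c).val) • bul (ee a) (bul (ee b) (ee c)) := by
  rw [bul_ee, bul_ee, bul_smul_left, bul_smul_right, bul_ee, bul_ee,
    smul_smul, smul_smul, smul_smul, add_assoc]
  congr 1
  simp only [octF, ← m1pow_add, ← mul_assoc]
  rw [expo_key]
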